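/- Under the matrix setup below, let g_1,…,g_M : ℝ → ℂ be measurable functions such that ς_i·ψ_j·g_k is Lebesgue integrable on [α,β] for all 1 ≤ i ≤ N, 1 ≤ j ≤ N, 1 ≤ k ≤ M. Then ∫_{[α,β]^M} det Φ(x) · det Ψ(x) · Π_{k=1}^M ξ(x_k) g_k(x_k) dx = T(A), where A is the N×N×N tensor with entries: a_{i,j,k} = ∫_α^β φ_i(x) ψ_j(x) ξ(x) g_k(x) dx for i ≤ M and k ≤ M; a_{i,j,k} = ∫_α^β ψ_j(x) ξ(x) g_k(x) dx for i > M and k ≤ M; a_{i,j,k} = 0 for k > M and i < k; and a_{i,j,k} = ψ̄_{j,k} for k > M and i ≥ k. (When (K/M!)·det Φ·det Ψ·Π ξ is the joint density of M unordered exchangeable random variables λ_1,…,λ_M, this gives E[Π_{ℓ=1}^M g_ℓ(λ_ℓ)] = (K/M!)·T(A); taking g_ℓ(x) = x^{m_ℓ} yields the joint moments and g_ℓ(x) = e^{ν_ℓ x} yields the joint moment generating function.) -/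

import Mathlib

/-!
Expanding both determinants turns the integrand into a signed sum, over `μ ∈ S_M` and
`σ ∈ S_N`, of products of functions of one variable each, times the constants `ψ̄_{σ(k),k}`
(`k > M`); by Fubini every term integrates to a product of one-dimensional integrals.
In `T(A)`, a permutation `π ∈ S_N` contributes only if `π(k) ≥ k` for all `k > M`, and on this
upward-closed tail that forces `π(k) = k` (the sum of the indices cannot grow). So only the
extensions of the `μ ∈ S_M` survive, and their terms are exactly the ones above.
-/
open MeasureTheory

/-- The pseudo-determinant operator on a rank-3 tensor. -/
noncomputable def pseudoDet {N : ℕ} (A : Fin N → Fin N → Fin N → ℂ) : ℂ :=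
  ∑ μ : Equiv.Perm (Fin N), ∑ σ : Equiv.Perm (Fin N),
    ((Equiv.Perm.sign μ : ℤ) : ℂ) * ((Equiv.Perm.sign σ : ℤ) : ℂ) *
      ∏ k : Fin N, A (μ k) (σ k) k

/-- `ς_i(x) = φ_i(x) ξ(x)` for `i ≤ M`, and `ς_i(x) = ξ(x)` for `i > M`. -/
def varsigma {M N : ℕ} (φ : Fin M → ℝ → ℂ) (ξ : ℝ → ℂ) (i : Fin N) (x : ℝ) : ℂ :=
  if h : (i : ℕ) < M then φ ⟨i, h⟩ x * ξ x else ξ x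

/-- The `M × M` matrix `Φ(x)` with entries `φ_i(x_j)`. -/
def PhiMat {M : ℕ} (φ : Fin M → ℝ → ℂ) (x : Fin M → ℝ) : Matrix (Fin M) (Fin M) ℂ :=
  Matrix.of fun i j => φ i (x j)

/-- The `N × N` matrix `Ψ(x)` with entries `ψ_i(x_j)` for `j ≤ M` and `ψ̄_{i,j}` for `j > M`. -/
def PsiMat {M N : ℕ} (ψ : Fin N → ℝ → ℂ) (ψbar : Fin N → Fin N → ℂ)
    (x : Fin M → ℝ) : Matrix (Fin N) (Fin N) ℂ :=
  Matrix.of fun i j => if h : (j : ℕ) < M then ψ i (x ⟨j, h⟩) else ψbar i j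

open Equiv Finset

theorem Fin.perm_apply_eq_self_of_le_apply {N : ℕ} (π : Perm (Fin N)) {s : Finset (Fin N)}
    (hs : ∀ k ∈ s, π k ∈ s) (hle : ∀ k ∈ s, k ≤ π k) : ∀ k ∈ s, π k = k := by
  have hmap : s.map π.toEmbedding = s :=
    map_eq_of_subset fun _ hx => by
      obtain ⟨k, hk, rfl⟩ := mem_map.mp hx
      exact hs k hk
  have hsum : ∑ k ∈ s, k.val = ∑ k ∈ s, (π k).val := by
    conv_lhs => rw [← hmap]
    rw [sum_map]
    rfl
  intro k hk
  exact Fin.ext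
    ((sum_eq_sum_iff_of_le (f := Fin.val) (g := fun k => (π k).val) hle).mp hsum k hk).symm

theorem Equiv.Perm.mem_range_extendDomain {α β : Type*} {p : β → Prop} [DecidablePred p]
    (f : α ≃ Subtype p) {π : Perm β} (h : ∀ b, ¬ p b → π b = b) :
    π ∈ Set.range fun μ : Perm α => μ.extendDomain f := by
  obtain ⟨ρ, hρ⟩ := (Perm.subtypeEquivSubtypePerm p).surjective ⟨π, h⟩
  have hπ : Perm.ofSubtype ρ = π := congrArg Subtype.val hρ
  refine ⟨f.symm.permCongr ρ, Equiv.ext fun b => ?_⟩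
  rw [← hπ]
  by_cases hb : p b
  · simp [Perm.extendDomain_apply_subtype _ _ hb, Perm.ofSubtype_apply_of_mem _ hb]
  · simp [Perm.extendDomain_apply_not_subtype _ _ hb, Perm.ofSubtype_apply_of_not_mem _ hb]

theorem Fin.prod_univ_eq_prod_castLE_mul {M N : ℕ} {R : Type*} [CommMonoid R] (hMN : M ≤ N)
    (f : Fin N → R) :
    ∏ k, f k = (∏ k : Fin M, f (Fin.castLE hMN k)) * ∏ k : {k : Fin N // ¬ (k : ℕ) < M}, f k := by
  rw [← Fintype.prod_subtype_mul_prod_subtype (fun k : Fin N => (k : ℕ) < M) f,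
    ← (Fin.castLEquiv hMN).prod_comp]
  rfl

theorem setIntegral_univ_pi_prod {ι 𝕜 : Type*} [Fintype ι] [RCLike 𝕜] {E : ι → Type*}
    [∀ i, MeasurableSpace (E i)] {μ : ∀ i, Measure (E i)} [∀ i, SigmaFinite (μ i)]
    (s : ∀ i, Set (E i)) (f : ∀ i, E i → 𝕜) :
    ∫ x in Set.univ.pi s, ∏ i, f i (x i) ∂(Measure.pi μ) = ∏ i, ∫ x in s i, f i x ∂(μ i) := by
  rw [Measure.restrict_pi_pi, integral_fintype_prod_eq_prod]

theorem integrableOn_univ_pi_prod {ι 𝕜 : Type*} [Fintype ι] [RCLike 𝕜] {E : ι → Type*}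
    [∀ i, MeasurableSpace (E i)] {μ : ∀ i, Measure (E i)} [∀ i, SigmaFinite (μ i)]
    {s : ∀ i, Set (E i)} {f : ∀ i, E i → 𝕜} (hf : ∀ i, IntegrableOn (f i) (s i) (μ i)) :
    IntegrableOn (fun x => ∏ i, f i (x i)) (Set.univ.pi s) (Measure.pi μ) := by
  rw [IntegrableOn, Measure.restrict_pi_pi]
  exact Integrable.fintype_prod_dep hf

theorem pseudoDet_eq_sum_extendDomain {M N : ℕ} (hMN : M ≤ N) (A : Fin N → Fin N → Fin N → ℂ)
    (hA : ∀ i j k : Fin N, M ≤ (k : ℕ) → (i : ℕ) < k → A i j k = 0) :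
    pseudoDet A = ∑ μ : Perm (Fin M), ∑ σ : Perm (Fin N),
      ((Perm.sign μ : ℤ) : ℂ) * ((Perm.sign σ : ℤ) : ℂ) *
        ∏ k, A (μ.extendDomain (Fin.castLEquiv hMN) k) (σ k) k := by
  refine (Fintype.sum_of_injective (fun μ : Perm (Fin M) => μ.extendDomain (Fin.castLEquiv hMN))
    (Perm.extendDomainHom_injective _) _ _ (fun π hπ => ?_) fun μ => by simp).symm
  obtain ⟨k, hkM, hk⟩ : ∃ k : Fin N, M ≤ (k : ℕ) ∧ π k < k := by
    by_contra! hle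
    have hfix := Fin.perm_apply_eq_self_of_le_apply π
      (s := univ.filter fun k : Fin N => M ≤ (k : ℕ))
      (fun k hk => by simpa using ((mem_filter.mp hk).2.trans (hle k (mem_filter.mp hk).2)))
      (fun k hk => hle k (mem_filter.mp hk).2)
    exact hπ (Perm.mem_range_extendDomain _ fun k hk => hfix k (by simpa using hk))
  refine sum_eq_zero fun σ _ => ?_
  rw [prod_eq_zero (f := fun k => A (π k) (σ k) k) (mem_univ k) (hA _ _ _ hkM hk), mul_zero]

section MatrixSetup

variable {M N : ℕ} (hMN : M ≤ N) (φ : Fin M → ℝ → ℂ) (ψ : Fin N → ℝ → ℂ) (ξ : ℝ → ℂ)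
  (ψbar : Fin N → Fin N → ℂ) (g : Fin M → ℝ → ℂ)

theorem det_mul_det_mul_prod_eq_sum (x : Fin M → ℝ) :
    (PhiMat φ x).det * (PsiMat ψ ψbar x).det * ∏ k, ξ (x k) * g k (x k)
      = ∑ μ : Perm (Fin M), ∑ σ : Perm (Fin N),
          ((Perm.sign μ : ℤ) : ℂ) * ((Perm.sign σ : ℤ) : ℂ) *
            ((∏ k, φ (μ k) (x k) * ψ (σ (Fin.castLE hMN k)) (x k) * ξ (x k) * g k (x k)) *
              ∏ k : {k : Fin N // ¬ (k : ℕ) < M}, ψbar (σ k) k) := by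
  rw [Matrix.det_apply', Matrix.det_apply', sum_mul_sum, sum_mul]
  refine sum_congr rfl fun μ _ => ?_
  rw [sum_mul]
  refine sum_congr rfl fun σ _ => ?_
  have hΨ : ∏ j, PsiMat ψ ψbar x (σ j) j = (∏ k, ψ (σ (Fin.castLE hMN k)) (x k)) *
      ∏ k : {k : Fin N // ¬ (k : ℕ) < M}, ψbar (σ k) k := by
    rw [Fin.prod_univ_eq_prod_castLE_mul hMN]
    congr 1 <;> refine prod_congr rfl fun k _ => ?_ <;> simp [PsiMat, k.2]
  simp only [hΨ, PhiMat, Matrix.of_apply, prod_mul_distrib]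
  ring

theorem setIntegral_det_mul_det_mul_prod {s : Set ℝ}
    (hint : ∀ i j k, IntegrableOn (fun t => φ i t * ψ j t * ξ t * g k t) s) :
    ∫ x : Fin M → ℝ in Set.univ.pi fun _ => s,
        (PhiMat φ x).det * (PsiMat ψ ψbar x).det * ∏ k, ξ (x k) * g k (x k)
      = ∑ μ : Perm (Fin M), ∑ σ : Perm (Fin N),
          ((Perm.sign μ : ℤ) : ℂ) * ((Perm.sign σ : ℤ) : ℂ) *
            ((∏ k, ∫ t in s, φ (μ k) t * ψ (σ (Fin.castLE hMN k)) t * ξ t * g k t) *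
              ∏ k : {k : Fin N // ¬ (k : ℕ) < M}, ψbar (σ k) k) := by
  have hterm : ∀ (μ : Perm (Fin M)) (σ : Perm (Fin N)), IntegrableOn (fun x : Fin M → ℝ =>
      ∏ k, φ (μ k) (x k) * ψ (σ (Fin.castLE hMN k)) (x k) * ξ (x k) * g k (x k))
      (Set.univ.pi fun _ => s) :=
    fun μ σ => integrableOn_univ_pi_prod fun k => hint _ _ _
  simp_rw [det_mul_det_mul_prod_eq_sum hMN φ ψ ξ ψbar g]
  rw [integral_finsetSum _ fun μ _ => integrable_finsetSum _ fun σ _ =>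
    ((hterm μ σ).mul_const _).const_mul _]
  refine sum_congr rfl fun μ _ => ?_
  rw [integral_finsetSum _ fun σ _ => ((hterm μ σ).mul_const _).const_mul _]
  refine sum_congr rfl fun σ _ => ?_
  rw [integral_const_mul, integral_mul_const, volume_pi, setIntegral_univ_pi_prod (fun _ => s)
    fun k t => φ (μ k) t * ψ (σ (Fin.castLE hMN k)) t * ξ t * g k t]

theorem varsigma_castLE (i : Fin M) (x : ℝ) :
    varsigma φ ξ (Fin.castLE hMN i) x = φ i x * ξ x := by
  simp [varsigma]

end MatrixSetup

theorem stmt_10_general {M N : ℕ} (hMN : M ≤ N) {α β : ℝ}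
    (φ : Fin M → ℝ → ℂ) (ψ : Fin N → ℝ → ℂ) (ξ : ℝ → ℂ) (ψbar : Fin N → Fin N → ℂ)
    (g : Fin M → ℝ → ℂ)
    (hIntg : ∀ (i j : Fin N) (k : Fin M),
      IntegrableOn (fun x => varsigma φ ξ i x * ψ j x * g k x) (Set.Icc α β)) :
    (∫ x : Fin M → ℝ in Set.univ.pi fun _ : Fin M => Set.Icc α β,
      (PhiMat φ x).det * (PsiMat ψ ψbar x).det *
        ∏ k : Fin M, ξ (x k) * g k (x k))
    = pseudoDet (fun i j k =>
        if hk : (k : ℕ) < M then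
          if hi : (i : ℕ) < M then
            ∫ x in Set.Icc α β, φ ⟨i, hi⟩ x * ψ j x * ξ x * g ⟨k, hk⟩ x
          else ∫ x in Set.Icc α β, ψ j x * ξ x * g ⟨k, hk⟩ x
        else if (i : ℕ) < (k : ℕ) then 0 else ψbar j k) := by
  have hint : ∀ i j k, IntegrableOn (fun t => φ i t * ψ j t * ξ t * g k t) (Set.Icc α β) :=
    fun i j k => (hIntg (Fin.castLE hMN i) j k).congr_fun
      (fun t _ => by simp only [varsigma_castLE]; ring) measurableSet_Icc
  rw [setIntegral_det_mul_det_mul_prod hMN φ ψ ξ ψbar g hint,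
    pseudoDet_eq_sum_extendDomain hMN _ fun i j k hk hik => by simp [hik, not_lt.mpr hk]]
  refine sum_congr rfl fun μ _ => sum_congr rfl fun σ _ => ?_
  rw [Fin.prod_univ_eq_prod_castLE_mul hMN]
  have h1 : ∀ k, μ.extendDomain (Fin.castLEquiv hMN) (Fin.castLE hMN k) = Fin.castLE hMN (μ k) :=
    Perm.extendDomain_apply_image μ (Fin.castLEquiv hMN)
  have h2 : ∀ k : {k : Fin N // ¬ (k : ℕ) < M}, μ.extendDomain (Fin.castLEquiv hMN) k = k :=
    fun k => Perm.extendDomain_apply_not_subtype μ _ k.2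
  congr 2 <;> refine prod_congr rfl fun k _ => ?_
  · simp [h1]
  · simp [h2, k.2]

/-- Expected value of a product of functions of the unordered eigenvalues:
`∫_{[α,β]^M} det Φ ⬝ det Ψ ⬝ Π_k ξ(x_k) g_k(x_k) dx = T(A)`. -/
theorem stmt_10 {M N : ℕ} (hM : 1 ≤ M) (hMN : M ≤ N) {α β : ℝ} (hαβ : α < β)
    (φ : Fin M → ℝ → ℂ) (ψ : Fin N → ℝ → ℂ) (ξ : ℝ → ℂ) (ψbar : Fin N → Fin N → ℂ)
    (hφ : ∀ i, Measurable (φ i)) (hψ : ∀ j, Measurable (ψ j)) (hξ : Measurable ξ)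
    (hInt : ∀ (i j : Fin N),
      IntegrableOn (fun x => varsigma φ ξ i x * ψ j x) (Set.Icc α β))
    (g : Fin M → ℝ → ℂ) (hg : ∀ k, Measurable (g k))
    (hIntg : ∀ (i j : Fin N) (k : Fin M),
      IntegrableOn (fun x => varsigma φ ξ i x * ψ j x * g k x) (Set.Icc α β)) :
    (∫ x : Fin M → ℝ in Set.univ.pi fun _ : Fin M => Set.Icc α β,
      (PhiMat φ x).det * (PsiMat ψ ψbar x).det *
        ∏ k : Fin M, ξ (x k) * g k (x k))
    = pseudoDet (fun i j k =>
        if hk : (k : ℕ) < M then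
          if hi : (i : ℕ) < M then
            ∫ x in Set.Icc α β, φ ⟨i, hi⟩ x * ψ j x * ξ x * g ⟨k, hk⟩ x
          else ∫ x in Set.Icc α β, ψ j x * ξ x * g ⟨k, hk⟩ x
        else if (i : ℕ) < (k : ℕ) then 0 else ψbar j k) :=
  stmt_10_general hMN φ ψ ξ ψbar g hIntg
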